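/- arXiv:2307.10968 — 3 statements merged into one kernel-verified Lean document; each statement's English description precedes it below -/
import Mathlib

section
/- (Boundedness from the fixed-point equation.) Let E be a measurable space, t₀ < t real numbers, Δ := [t₀, t], and (κ_{r,s})_{t₀ ≤ r ≤ s ≤ t} a family of probability kernels from E to E. Let Q ≥ 0 and let ψ be an operator mapping bounded measurable functions E → ℝ to bounded measurable functions such that ψ(z)(x) ≥ −Q·‖z‖∞ for every bounded measurable z : E → ℝ with z ≥ 0 pointwise and every x ∈ E. Assume (t − t₀)·Q ≤ 1/2. Let f : E → ℝ be bounded measurable and define F(r, x) := ∫_E f(y) κ_{r,t}(x, dy). Let v : Δ × E → ℝ be jointly measurable, bounded, with v(s, y) ≥ 0 for all (s,y), such that (s,y) ↦ ψ(v(s,·))(y) is jointly measurable and bounded, and suppose v(r, x) = F(r, x) − Ψ(v)(r, x) for all (r, x) ∈ Δ × E. Then ‖v‖_Δ ≤ 2·‖F‖_Δ. -/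
open MeasureTheory ProbabilityTheory

/-- **Boundedness from the fixed-point equation.**
Let `Δ := [t₀, t]`, `(κ r s)` probability kernels, `ψ` an operator with
`ψ(z)(x) ≥ −Q ‖z‖∞` for bounded measurable `z ≥ 0`, and `(t − t₀) Q ≤ 1/2`.
If `F(r, x) := ∫ f dκ_{r,t}(x, ·)` and the nonnegative, bounded, jointly measurable `v`
satisfies `v(r,x) = F(r,x) − Ψ(v)(r,x)` on `Δ × E`, where
`Ψ(v)(r, x) := ∫_r^t ∫_E ψ(v(s,·))(y) κ_{r,s}(x, dy) ds`, then `‖v‖_Δ ≤ 2 ‖F‖_Δ`. -/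
theorem boundedness_from_fixed_point_equation {E : Type*} [MeasurableSpace E]
    (t₀ t : ℝ) (ht : t₀ < t)
    (κ : ℝ → ℝ → Kernel E E)
    (hκ : ∀ r s, t₀ ≤ r → r ≤ s → s ≤ t → IsMarkovKernel (κ r s))
    (Q : ℝ) (hQ : 0 ≤ Q)
    (ψ : (E → ℝ) → E → ℝ)
    (hψmeas : ∀ z : E → ℝ, Measurable z → (∃ B : ℝ, ∀ x, |z x| ≤ B) →
      Measurable (ψ z) ∧ ∃ B : ℝ, ∀ x, |ψ z x| ≤ B)
    (hψlow : ∀ z : E → ℝ, Measurable z → (∃ B : ℝ, ∀ x, |z x| ≤ B) →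
      (∀ x, 0 ≤ z x) → ∀ x, -Q * (⨆ x', |z x'|) ≤ ψ z x)
    (hQt : (t - t₀) * Q ≤ 1 / 2)
    (f : E → ℝ) (hfm : Measurable f) (hfb : ∃ B : ℝ, ∀ x, |f x| ≤ B)
    (v : ℝ → E → ℝ)
    (hvm : Measurable (fun p : ℝ × E => v p.1 p.2))
    (hvb : ∃ B : ℝ, ∀ s y, |v s y| ≤ B)
    (hvpos : ∀ s y, 0 ≤ v s y)
    (hψv : Measurable (fun p : ℝ × E => ψ (v p.1) p.2) ∧ ∃ B : ℝ, ∀ s y, |ψ (v s) y| ≤ B)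
    (hfix : ∀ r ∈ Set.Icc t₀ t, ∀ x : E,
      v r x = (∫ y, f y ∂(κ r t x)) - ∫ s in r..t, ∫ y, ψ (v s) y ∂(κ r s x)) :
    (⨆ p : Set.Icc t₀ t × E, |v (p.1 : ℝ) p.2|)
      ≤ 2 * ⨆ p : Set.Icc t₀ t × E, |∫ y, f y ∂(κ (p.1 : ℝ) t p.2)| := by

  cases isEmpty_or_nonempty E with
  | inl h =>
    haveI : IsEmpty (Set.Icc t₀ t × E) := ⟨fun p => h.false p.2⟩
    rw [Real.iSup_of_isEmpty, Real.iSup_of_isEmpty]; norm_num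
  | inr hE =>
    obtain ⟨B, hB⟩ := hvb
    obtain ⟨Bf, hBf⟩ := hfb
    obtain ⟨hψvm, Bψ, hBψ⟩ := hψv
    have hne : Nonempty (Set.Icc t₀ t × E) := ⟨⟨⟨t₀, le_refl _, ht.le⟩, Classical.arbitrary E⟩⟩
    set M := ⨆ p : Set.Icc t₀ t × E, |v (p.1 : ℝ) p.2| with hMdef
    set N := ⨆ p : Set.Icc t₀ t × E, |∫ y, f y ∂(κ (p.1 : ℝ) t p.2)| with hNdef
    have hMbdd : BddAbove (Set.range fun p : Set.Icc t₀ t × E => |v (p.1 : ℝ) p.2|) :=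
      ⟨B, by rintro _ ⟨p, rfl⟩; exact hB _ _⟩
    have hvleM : ∀ r ∈ Set.Icc t₀ t, ∀ x : E, |v r x| ≤ M := fun r hr x =>
      le_ciSup hMbdd (⟨⟨r, hr⟩, x⟩ : Set.Icc t₀ t × E)
    have hM0 : 0 ≤ M :=
      le_trans (abs_nonneg _) (hvleM t₀ ⟨le_refl _, ht.le⟩ (Classical.arbitrary E))
    have hFbdd : BddAbove
        (Set.range fun p : Set.Icc t₀ t × E => |∫ y, f y ∂(κ (p.1 : ℝ) t p.2)|) := by
      refine ⟨Bf, ?_⟩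
      rintro _ ⟨⟨⟨r, hr⟩, x⟩, rfl⟩
      haveI := hκ r t hr.1 hr.2 le_rfl
      calc |∫ y, f y ∂(κ r t x)| = ‖∫ y, f y ∂(κ r t x)‖ := (Real.norm_eq_abs _).symm
        _ ≤ Bf * ((κ r t x) Set.univ).toReal :=
            norm_integral_le_of_norm_le_const (ae_of_all _ fun y => by simpa using hBf y)
        _ = Bf := by simp
    have hFleN : ∀ r ∈ Set.Icc t₀ t, ∀ x, |∫ y, f y ∂(κ r t x)| ≤ N := fun r hr x =>
      le_ciSup hFbdd (⟨⟨r, hr⟩, x⟩ : Set.Icc t₀ t × E)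
    have key : ∀ r ∈ Set.Icc t₀ t, ∀ x, |v r x| ≤ N + M / 2 := by
      intro r hr x
      have hrt : r ≤ t := hr.2
      have hinner : ∀ s ∈ Set.Icc r t, -(Q * M) ≤ ∫ y, ψ (v s) y ∂(κ r s x) := by
        intro s hs
        have hsΔ : s ∈ Set.Icc t₀ t := ⟨hr.1.trans hs.1, hs.2⟩
        haveI := hκ r s hr.1 hs.1 hs.2
        have hvs : Measurable (v s) := hvm.comp (measurable_const.prodMk measurable_id)
        have hψlow' : ∀ y, -(Q * M) ≤ ψ (v s) y := by
          intro y
          have h1 := hψlow (v s) hvs ⟨B, fun y => hB s y⟩ (hvpos s) y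
          have h2 : (⨆ y', |v s y'|) ≤ M := ciSup_le fun y' => hvleM s hsΔ y'
          nlinarith [mul_le_mul_of_nonneg_left h2 hQ]
        have hint : Integrable (ψ (v s)) (κ r s x) := by
          refine Integrable.mono' (integrable_const Bψ)
            ((hψmeas (v s) hvs ⟨B, fun y => hB s y⟩).1).aestronglyMeasurable
            (ae_of_all _ fun y => ?_)
          simpa using hBψ s y
        calc -(Q * M) = ∫ _, -(Q * M) ∂(κ r s x) := by simp
          _ ≤ ∫ y, ψ (v s) y ∂(κ r s x) := integral_mono (integrable_const _) hint hψlow'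
      have hII : -(M / 2) ≤ ∫ s in r..t, ∫ y, ψ (v s) y ∂(κ r s x) := by
        by_cases hInt : IntervalIntegrable (fun s => ∫ y, ψ (v s) y ∂(κ r s x)) volume r t
        · have h1 : ∫ _ in r..t, (-(Q * M)) ≤ ∫ s in r..t, ∫ y, ψ (v s) y ∂(κ r s x) :=
            intervalIntegral.integral_mono_on hrt intervalIntegrable_const hInt hinner
          rw [intervalIntegral.integral_const] at h1
          have h2 : (t - r) * Q ≤ 1 / 2 := by
            have : (t - r) * Q ≤ (t - t₀) * Q :=
              mul_le_mul_of_nonneg_right (by linarith [hr.1]) hQ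
            linarith
          have h3 : (t - r) * (Q * M) ≤ 1 / 2 * M := by
            nlinarith [mul_le_mul_of_nonneg_right h2 hM0]
          simp only [smul_eq_mul] at h1
          nlinarith
        · rw [intervalIntegral.integral_undef hInt]
          linarith
      rw [abs_of_nonneg (hvpos r x), hfix r hr x]
      have hF := hFleN r hr x
      have hle := le_abs_self (∫ y, f y ∂(κ r t x))
      linarith
    have hMN : M ≤ N + M / 2 := ciSup_le fun p => key p.1 p.1.2 p.2
    linarith
end

section
/- (Boundedness of the approximating solutions.) Let E be a measurable space, t > 0, and (κ_{r,s})_{0 ≤ r ≤ s ≤ t} a family of probability kernels from E to E satisfying the Chapman–Kolmogorov relations. Let Q ≥ 0 and let ψ be an operator mapping bounded measurable functions E → ℝ to bounded measurable functions such that ψ(z)(x) ≥ −Q·‖z‖∞ for every bounded measurable z ≥ 0 and every x. Let φ : E → ℝ be bounded measurable with φ ≥ 0, let ε > 0 and set f_ε(y) := (1 − e^{−εφ(y)})/ε. Let w : [0, t] × E → ℝ be jointly measurable, bounded, nonnegative, with (s,y) ↦ ψ(w(s,·))(y) jointly measurable and bounded, such that for all r ∈ [0, t] and x ∈ E: w(r,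 x) = ∫_E f_ε(y) κ_{r,t}(x, dy) − ∫_r^t ∫_E ψ(w(s,·))(y) κ_{r,s}(x, dy) ds. Let 0 = t₀ < t₁ < ... < t_n = t be a partition with Q·(t_j − t_{j−1}) ≤ 1/2 for every j. Then sup_{r ∈ [t_{j−1}, t_j), x ∈ E} |w(r, x)| ≤ 2^{n−j+1}·‖φ‖∞ for each j = 1, …, n; in particular sup_{x ∈ E} |w(0, x)| ≤ 2^n·‖φ‖∞. -/
/-!
For `r` in the strip `[t_i, t_{i+1})` the equation gives
`w(r,x) ≤ ‖φ‖∞ + Q ∫_r^t sup_y w(s,y) ds`, since `0 ≤ f_ε ≤ φ` and `ψ(w(s,·)) ≥ -Q sup_y w(s,·)`.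
Bounding `sup_y w(s,y)` by the supremum `a_k` of `w` over the strip containing `s` and using
`Q (t_{k+1} - t_k) ≤ 1/2` yields `a_i ≤ ‖φ‖∞ + ½ ∑_{k ≥ i} a_k`. Absorbing `a_i` gives
`a_i ≤ 2‖φ‖∞ + ∑_{k > i} a_k`, and backward induction over the strips gives `a_i ≤ 2^{n-i} ‖φ‖∞`.
-/

open MeasureTheory ProbabilityTheory Set

lemma sum_Ico_le_of_le_add_half_sum {a : ℕ → ℝ} {c : ℝ} {n : ℕ}
    (h : ∀ i < n, a i ≤ c + (∑ k ∈ Finset.Ico i n, a k) / 2) {i : ℕ} (hi : i ≤ n) :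
    ∑ k ∈ Finset.Ico i n, a k ≤ 2 * (2 ^ (n - i) - 1) * c := by
  induction hi using Nat.decreasingInduction with
  | self => simp
  | of_succ k hk ih =>
    have hsplit := Finset.sum_eq_sum_Ico_succ_bot hk a
    have hpow : (2 : ℝ) ^ (n - k) = 2 * 2 ^ (n - (k + 1)) := by
      rw [← pow_succ']; congr 1; omega
    have hk' := h k hk
    rw [hsplit] at hk' ⊢
    rw [hpow]
    linarith

lemma le_two_pow_mul_of_le_add_half_sum {a : ℕ → ℝ} {c : ℝ} {n : ℕ}
    (h : ∀ i < n, a i ≤ c + (∑ k ∈ Finset.Ico i n, a k) / 2) {i : ℕ} (hi : i < n) :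
    a i ≤ 2 ^ (n - i) * c := by
  have htail := sum_Ico_le_of_le_add_half_sum h (Nat.succ_le_of_lt hi)
  have hpow : (2 : ℝ) ^ (n - i) = 2 * 2 ^ (n - (i + 1)) := by
    rw [← pow_succ']; congr 1; omega
  have hi' := h i hi
  rw [Finset.sum_eq_sum_Ico_succ_bot hi] at hi'
  rw [hpow]
  linarith

lemma exists_mem_Ico_succ_of_mem_Ico {τ : ℕ → ℝ} {i n : ℕ} {s : ℝ} (hi : i ≤ n)
    (hs : s ∈ Ico (τ i) (τ n)) : ∃ k ∈ Finset.Ico i n, s ∈ Ico (τ k) (τ (k + 1)) := by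
  have hcover := Ico_subset_biUnion_Ico (n - i) (fun j ↦ τ (i + j))
  simp only [add_zero, Nat.add_sub_cancel' hi] at hcover
  obtain ⟨j, hj, hsj⟩ := mem_iUnion₂.1 (hcover hs)
  have := Finset.mem_range.1 hj
  exact ⟨i + j, Finset.mem_Ico.2 ⟨by omega, by omega⟩, hsj⟩

lemma integrable_indicator_Ico_const (a b c : ℝ) : Integrable ((Ico a b).indicator fun _ ↦ c) :=
  (integrable_indicator_iff measurableSet_Ico).2 (integrableOn_const (by simp))

noncomputable def stepFunction (τ c : ℕ → ℝ) (S : Finset ℕ) (s : ℝ) : ℝ :=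
  ∑ k ∈ S, (Ico (τ k) (τ (k + 1))).indicator (fun _ ↦ c k) s

section stepFunction

variable {τ c : ℕ → ℝ} {S : Finset ℕ}

lemma integrable_stepFunction : Integrable (stepFunction τ c S) :=
  integrable_finsetSum _ fun _ _ ↦ integrable_indicator_Ico_const _ _ _

lemma integral_stepFunction (hτ : Monotone τ) :
    ∫ s, stepFunction τ c S s = ∑ k ∈ S, (τ (k + 1) - τ k) * c k := by
  unfold stepFunction
  rw [integral_finsetSum _ fun _ _ ↦ integrable_indicator_Ico_const _ _ _]
  refine Finset.sum_congr rfl fun k _ ↦ ?_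
  rw [integral_indicator_const _ measurableSet_Ico,
    Real.volume_real_Ico_of_le (hτ (Nat.le_succ k)), smul_eq_mul]

lemma stepFunction_nonneg (hc : ∀ k, 0 ≤ c k) : 0 ≤ stepFunction τ c S :=
  fun _ ↦ Finset.sum_nonneg fun k _ ↦ indicator_nonneg (fun _ _ ↦ hc k) _

lemma le_stepFunction (hc : ∀ k, 0 ≤ c k) {k : ℕ} (hk : k ∈ S) {s : ℝ}
    (hs : s ∈ Ico (τ k) (τ (k + 1))) : c k ≤ stepFunction τ c S s := by
  calc c k = (Ico (τ k) (τ (k + 1))).indicator (fun _ ↦ c k) s :=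
        (indicator_of_mem hs (fun _ ↦ c k)).symm
    _ ≤ stepFunction τ c S s :=
      Finset.single_le_sum (f := fun k ↦ (Ico (τ k) (τ (k + 1))).indicator (fun _ ↦ c k) s)
        (fun k _ ↦ indicator_nonneg (fun _ _ ↦ hc k) _) hk

end stepFunction

/-- The integrand `s ↦ ∫ ψ(w s) dκ_{r,s}(x)` is not known to be integrable (nothing is assumed
about how `κ r s` depends on `s`); when it is not, its integral is `0`. -/
lemma integral_mono_of_integral_nonpos {α : Type*} [MeasurableSpace α] {μ : Measure α}
    {f g : α → ℝ} (hf : Integrable f μ) (hfg : f ≤ᵐ[μ] g) (hf0 : ∫ a, f a ∂μ ≤ 0) :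
    ∫ a, f a ∂μ ≤ ∫ a, g a ∂μ := by
  by_cases hg : Integrable g μ
  · exact integral_mono_ae hf hg hfg
  · rwa [integral_undef hg]

lemma neg_intervalIntegral_le_integral {F g : ℝ → ℝ} {r t : ℝ} (hrt : r ≤ t)
    (hg : Integrable g) (hg0 : 0 ≤ g) (hFg : ∀ s ∈ Ioo r t, -g s ≤ F s) :
    -∫ s in r..t, F s ≤ ∫ s, g s := by
  have hIoo : -∫ s in Ioo r t, g s ≤ ∫ s in Ioo r t, F s := by
    rw [← integral_neg]
    refine integral_mono_of_integral_nonpos hg.integrableOn.neg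
      ((ae_restrict_iff' measurableSet_Ioo).2 (.of_forall hFg)) ?_
    rw [integral_neg, neg_nonpos]
    exact setIntegral_nonneg measurableSet_Ioo fun s _ ↦ hg0 s
  rw [intervalIntegral.integral_of_le hrt, integral_Ioc_eq_integral_Ioo]
  linarith [setIntegral_le_integral (s := Ioo r t) hg (.of_forall hg0)]

section ProbabilityMeasure

variable {α : Type*} [MeasurableSpace α] {μ : Measure α} [IsProbabilityMeasure μ] {f : α → ℝ}

lemma integral_le_of_abs_le {C : ℝ} (h : ∀ a, |f a| ≤ C) : ∫ a, f a ∂μ ≤ C := by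
  have hnorm := norm_integral_le_of_norm_le_const (μ := μ) (f := f) (.of_forall h)
  rw [probReal_univ, mul_one] at hnorm
  exact (le_abs_self _).trans hnorm

lemma le_integral_of_le {c : ℝ} (hf : Integrable f μ) (h : ∀ a, c ≤ f a) : c ≤ ∫ a, f a ∂μ := by
  simpa using integral_mono (integrable_const c) hf h

end ProbabilityMeasure

lemma abs_one_sub_exp_neg_mul_div_le {ε a : ℝ} (hε : 0 < ε) (ha : 0 ≤ a) :
    |(1 - Real.exp (-ε * a)) / ε| ≤ a := by
  have hexp : Real.exp (-ε * a) ≤ 1 := Real.exp_le_one_iff.2 (by nlinarith)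
  rw [abs_of_nonneg (div_nonneg (sub_nonneg.2 hexp) hε.le), div_le_iff₀ hε]
  linarith [Real.add_one_le_exp (-ε * a)]

lemma Fin.clamp_val_eq_castSucc {n : ℕ} (i : Fin n) : Fin.clamp i n = i.castSucc :=
  Fin.ext (min_eq_left i.2.le)

lemma Fin.clamp_val_add_one_eq_succ {n : ℕ} (i : Fin n) : Fin.clamp (i + 1) n = i.succ :=
  Fin.ext (min_eq_left i.2)

noncomputable def stripSup {E : Type*} (w : ℝ → E → ℝ) (a b : ℝ) : ℝ :=
  ⨆ p : Ico a b × E, w p.1 p.2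

section stripSup

variable {E : Type*} {w : ℝ → E → ℝ} {a b : ℝ}

lemma le_stripSup (hwb : ∃ B, ∀ s y, |w s y| ≤ B) {s : ℝ} (hs : s ∈ Ico a b) (y : E) :
    w s y ≤ stripSup w a b := by
  obtain ⟨B, hB⟩ := hwb
  exact le_ciSup (f := fun p : Ico a b × E ↦ w p.1 p.2)
    ⟨B, forall_mem_range.2 fun p ↦ (le_abs_self _).trans (hB _ _)⟩ (⟨s, hs⟩, y)

lemma stripSup_nonneg (hwpos : ∀ s y, 0 ≤ w s y) : 0 ≤ stripSup w a b :=
  Real.iSup_nonneg fun _ ↦ hwpos _ _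

lemma stripSup_le {C : ℝ} (h : ∀ s ∈ Ico a b, ∀ y, w s y ≤ C) (hC : 0 ≤ C) :
    stripSup w a b ≤ C :=
  Real.iSup_le (fun p ↦ h p.1 p.1.2 p.2) hC

lemma iSup_abs_le_stepFunction_stripSup (hwb : ∃ B, ∀ s y, |w s y| ≤ B)
    (hwpos : ∀ s y, 0 ≤ w s y) {τ : ℕ → ℝ} {i n : ℕ} (hi : i ≤ n) {s : ℝ}
    (hs : s ∈ Ico (τ i) (τ n)) :
    ⨆ y, |w s y| ≤ stepFunction τ (fun k ↦ stripSup w (τ k) (τ (k + 1))) (Finset.Ico i n) s := by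
  obtain ⟨k, hk, hsk⟩ := exists_mem_Ico_succ_of_mem_Ico hi hs
  have hc : ∀ k, 0 ≤ stripSup w (τ k) (τ (k + 1)) := fun k ↦ stripSup_nonneg hwpos
  refine Real.iSup_le (fun y ↦ ?_) (stepFunction_nonneg hc s)
  rw [abs_of_nonneg (hwpos s y)]
  exact (le_stripSup hwb hsk y).trans (le_stepFunction hc hk hsk)

end stripSup

lemma le_add_half_sum_stripSup {E : Type*} [MeasurableSpace E] {t : ℝ}
    {κ : ℝ → ℝ → Kernel E E} (hκ : ∀ r s, 0 ≤ r → r ≤ s → s ≤ t → IsMarkovKernel (κ r s))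
    {Q : ℝ} (hQ : 0 ≤ Q) {ψ : (E → ℝ) → E → ℝ}
    (hψlow : ∀ z : E → ℝ, Measurable z → (∃ B : ℝ, ∀ x, |z x| ≤ B) →
      (∀ x, 0 ≤ z x) → ∀ x, -Q * (⨆ x', |z x'|) ≤ ψ z x)
    {φ : E → ℝ} {M : ℝ} (hφpos : ∀ x, 0 ≤ φ x) (hφM : ∀ x, φ x ≤ M) {ε : ℝ} (hε : 0 < ε)
    {w : ℝ → E → ℝ} (hwm : Measurable (fun p : ℝ × E => w p.1 p.2))
    (hwb : ∃ B : ℝ, ∀ s y, |w s y| ≤ B) (hwpos : ∀ s y, 0 ≤ w s y)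
    (hψw : Measurable (fun p : ℝ × E => ψ (w p.1) p.2) ∧ ∃ B : ℝ, ∀ s y, |ψ (w s) y| ≤ B)
    (hfix : ∀ r ∈ Set.Icc (0 : ℝ) t, ∀ x : E,
      w r x = (∫ y, (1 - Real.exp (-ε * φ y)) / ε ∂(κ r t x)) -
        ∫ s in r..t, ∫ y, ψ (w s) y ∂(κ r s x))
    {τ : ℕ → ℝ} (hτ : Monotone τ) (hτ0 : 0 ≤ τ 0) {n : ℕ} (hτn : τ n = t)
    (hmesh : ∀ k < n, Q * (τ (k + 1) - τ k) ≤ 1 / 2)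
    {i : ℕ} (hi : i < n) {r : ℝ} (hr : r ∈ Ico (τ i) (τ (i + 1))) (x : E) :
    w r x ≤ M + (∑ k ∈ Finset.Ico i n, stripSup w (τ k) (τ (k + 1))) / 2 := by
  set a : ℕ → ℝ := fun k ↦ stripSup w (τ k) (τ (k + 1))
  set h : ℝ → ℝ := stepFunction τ a (Finset.Ico i n)
  have ha : ∀ k, 0 ≤ a k := fun k ↦ stripSup_nonneg hwpos
  have hr0 : 0 ≤ r := hτ0.trans ((hτ (Nat.zero_le i)).trans hr.1)
  have hrt : r ≤ t := hr.2.le.trans (hτn ▸ hτ hi)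
  have hdata : ∫ y, (1 - Real.exp (-ε * φ y)) / ε ∂(κ r t x) ≤ M := by
    have := (hκ r t hr0 hrt le_rfl).isProbabilityMeasure x
    exact integral_le_of_abs_le fun y ↦
      (abs_one_sub_exp_neg_mul_div_le hε (hφpos y)).trans (hφM y)
  have hψ : ∀ s ∈ Ioo r t, -(Q * h s) ≤ ∫ y, ψ (w s) y ∂(κ r s x) := by
    intro s hs
    have := (hκ r s hr0 hs.1.le hs.2.le).isProbabilityMeasure x
    obtain ⟨Bψ, hBψ⟩ := hψw.2
    have hint : Integrable (ψ (w s)) (κ r s x) :=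
      .of_bound (hψw.1.comp measurable_prodMk_left).aestronglyMeasurable Bψ (.of_forall (hBψ s))
    have hlow := hψlow (w s) (hwm.comp measurable_prodMk_left) (hwb.imp fun _ hB ↦ hB s)
      (hwpos s)
    have hsup : ⨆ y, |w s y| ≤ h s :=
      iSup_abs_le_stepFunction_stripSup hwb hwpos hi.le ⟨hr.1.trans hs.1.le, hτn ▸ hs.2⟩
    calc -(Q * h s) ≤ -Q * ⨆ y, |w s y| := by
          rw [neg_mul]; exact neg_le_neg (mul_le_mul_of_nonneg_left hsup hQ)
      _ ≤ _ := le_integral_of_le hint hlow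
  have hmesh_sum : Q * ∫ s, h s ≤ (∑ k ∈ Finset.Ico i n, a k) / 2 := by
    rw [integral_stepFunction hτ, Finset.mul_sum, Finset.sum_div]
    refine Finset.sum_le_sum fun k hk ↦ ?_
    nlinarith [hmesh k (Finset.mem_Ico.1 hk).2, ha k]
  have hΨ := neg_intervalIntegral_le_integral hrt (integrable_stepFunction.const_mul Q)
    (fun s ↦ mul_nonneg hQ (stepFunction_nonneg ha s)) hψ
  rw [integral_const_mul] at hΨ
  rw [hfix r ⟨hr0, hrt⟩ x]
  linarith

theorem boundedness_of_approximating_solutions_general {E : Type*} [MeasurableSpace E]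
    (t : ℝ)
    (κ : ℝ → ℝ → Kernel E E)
    (hκ : ∀ r s, 0 ≤ r → r ≤ s → s ≤ t → IsMarkovKernel (κ r s))
    (Q : ℝ) (hQ : 0 ≤ Q)
    (ψ : (E → ℝ) → E → ℝ)
    (hψlow : ∀ z : E → ℝ, Measurable z → (∃ B : ℝ, ∀ x, |z x| ≤ B) →
      (∀ x, 0 ≤ z x) → ∀ x, -Q * (⨆ x', |z x'|) ≤ ψ z x)
    (φ : E → ℝ) (hφb : ∃ B : ℝ, ∀ x, |φ x| ≤ B)
    (hφpos : ∀ x, 0 ≤ φ x)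
    (ε : ℝ) (hε : 0 < ε)
    (w : ℝ → E → ℝ)
    (hwm : Measurable (fun p : ℝ × E => w p.1 p.2))
    (hwb : ∃ B : ℝ, ∀ s y, |w s y| ≤ B)
    (hwpos : ∀ s y, 0 ≤ w s y)
    (hψw : Measurable (fun p : ℝ × E => ψ (w p.1) p.2) ∧ ∃ B : ℝ, ∀ s y, |ψ (w s) y| ≤ B)
    (hfix : ∀ r ∈ Set.Icc (0 : ℝ) t, ∀ x : E,
      w r x = (∫ y, (1 - Real.exp (-ε * φ y)) / ε ∂(κ r t x)) -
        ∫ s in r..t, ∫ y, ψ (w s) y ∂(κ r s x))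
    (n : ℕ) (hn : 0 < n)
    (tp : Fin (n + 1) → ℝ) (htp0 : tp 0 = 0) (htpn : tp (Fin.last n) = t)
    (htpmono : StrictMono tp)
    (hmesh : ∀ i : Fin n, Q * (tp i.succ - tp i.castSucc) ≤ 1 / 2) :
    (∀ i : Fin n, ∀ r ∈ Set.Ico (tp i.castSucc) (tp i.succ), ∀ x : E,
        |w r x| ≤ 2 ^ (n - (i : ℕ)) * ⨆ x', |φ x'|) ∧
      (∀ x : E, |w 0 x| ≤ 2 ^ n * ⨆ x', |φ x'|) := by
  -- the partition extended to `ℕ` by `τ k = t` for `k ≥ n`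
  set τ : ℕ → ℝ := fun k ↦ tp (Fin.clamp k n)
  have hτcs (i : Fin n) : τ i = tp i.castSucc := congrArg tp (Fin.clamp_val_eq_castSucc i)
  have hτs (i : Fin n) : τ (i + 1) = tp i.succ := congrArg tp (Fin.clamp_val_add_one_eq_succ i)
  have hτ : Monotone τ := htpmono.monotone.comp Fin.clamp_monotone
  have hτ0 : τ 0 = 0 := htp0 ▸ congrArg tp (Fin.ext (Nat.zero_min n))
  have hτn : τ n = t := htpn ▸ congrArg tp (Fin.clamp_eq_last n n le_rfl)
  set M := ⨆ x, |φ x|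
  have hM : 0 ≤ M := Real.iSup_nonneg fun _ ↦ abs_nonneg _
  have hφM (y : E) : φ y ≤ M := by
    obtain ⟨B, hB⟩ := hφb
    exact (le_abs_self _).trans (le_ciSup ⟨B, forall_mem_range.2 hB⟩ y)
  have hmeshτ : ∀ k < n, Q * (τ (k + 1) - τ k) ≤ 1 / 2 := fun k hk ↦ by
    simpa only [hτcs ⟨k, hk⟩, hτs ⟨k, hk⟩] using hmesh ⟨k, hk⟩
  have hstrip : ∀ i < n, stripSup w (τ i) (τ (i + 1)) ≤
      M + (∑ k ∈ Finset.Ico i n, stripSup w (τ k) (τ (k + 1))) / 2 := fun i hi ↦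
    stripSup_le (fun r hr ↦ le_add_half_sum_stripSup hκ hQ hψlow hφpos hφM hε hwm hwb hwpos hψw
        hfix hτ hτ0.ge hτn hmeshτ hi hr)
      (add_nonneg hM (div_nonneg (Finset.sum_nonneg fun _ _ ↦ stripSup_nonneg hwpos) zero_le_two))
  have hbound (i : Fin n) (r : ℝ) (hr : r ∈ Ico (tp i.castSucc) (tp i.succ)) (x : E) :
      |w r x| ≤ 2 ^ (n - (i : ℕ)) * M := by
    rw [← hτcs, ← hτs] at hr
    rw [abs_of_nonneg (hwpos r x)]
    exact (le_stripSup hwb hr x).trans (le_two_pow_mul_of_le_add_half_sum hstrip i.2)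
  refine ⟨hbound, fun x ↦ ?_⟩
  simpa using hbound ⟨0, hn⟩ 0 ⟨by simp [htp0], htp0 ▸ htpmono (Fin.succ_pos _)⟩ x

/-- **Boundedness of the approximating solutions `v_t^ε φ`.**
Let `(κ r s)_{0 ≤ r ≤ s ≤ t}` be probability kernels satisfying Chapman–Kolmogorov,
`ψ(z)(x) ≥ −Q ‖z‖∞` for bounded measurable `z ≥ 0`, `φ ≥ 0` bounded measurable, `ε > 0`,
`f_ε(y) := (1 − e^{−εφ(y)})/ε`, and let the nonnegative, bounded, jointly measurable `w`
satisfy the evolution equation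
`w(r,x) = ∫ f_ε dκ_{r,t}(x,·) − ∫_r^t ∫ ψ(w(s,·))(y) κ_{r,s}(x, dy) ds` on `[0,t] × E`.
Then along a partition `0 = t₀ < t₁ < ⋯ < t_n = t` with `Q (t_j − t_{j−1}) ≤ 1/2`,
`sup_{r ∈ [t_{j−1}, t_j), x} |w(r,x)| ≤ 2^{n−j+1} ‖φ‖∞`; in particular
`sup_x |w(0,x)| ≤ 2^n ‖φ‖∞`.  (Below, `i : Fin n` encodes the interval
`[t_i, t_{i+1})`, i.e. the paper's index `j = i + 1`, so the bound reads `2^{n−i}`.) -/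
theorem boundedness_of_approximating_solutions {E : Type*} [MeasurableSpace E]
    (t : ℝ) (htpos : 0 < t)
    (κ : ℝ → ℝ → Kernel E E)
    (hκ : ∀ r s, 0 ≤ r → r ≤ s → s ≤ t → IsMarkovKernel (κ r s))
    (hCK : ∀ r s u, 0 ≤ r → r ≤ s → s ≤ u → u ≤ t → κ r u = (κ s u).comp (κ r s))
    (Q : ℝ) (hQ : 0 ≤ Q)
    (ψ : (E → ℝ) → E → ℝ)
    (hψmeas : ∀ z : E → ℝ, Measurable z → (∃ B : ℝ, ∀ x, |z x| ≤ B) →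
      Measurable (ψ z) ∧ ∃ B : ℝ, ∀ x, |ψ z x| ≤ B)
    (hψlow : ∀ z : E → ℝ, Measurable z → (∃ B : ℝ, ∀ x, |z x| ≤ B) →
      (∀ x, 0 ≤ z x) → ∀ x, -Q * (⨆ x', |z x'|) ≤ ψ z x)
    (φ : E → ℝ) (hφm : Measurable φ) (hφb : ∃ B : ℝ, ∀ x, |φ x| ≤ B)
    (hφpos : ∀ x, 0 ≤ φ x)
    (ε : ℝ) (hε : 0 < ε)
    (w : ℝ → E → ℝ)
    (hwm : Measurable (fun p : ℝ × E => w p.1 p.2))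
    (hwb : ∃ B : ℝ, ∀ s y, |w s y| ≤ B)
    (hwpos : ∀ s y, 0 ≤ w s y)
    (hψw : Measurable (fun p : ℝ × E => ψ (w p.1) p.2) ∧ ∃ B : ℝ, ∀ s y, |ψ (w s) y| ≤ B)
    (hfix : ∀ r ∈ Set.Icc (0 : ℝ) t, ∀ x : E,
      w r x = (∫ y, (1 - Real.exp (-ε * φ y)) / ε ∂(κ r t x)) -
        ∫ s in r..t, ∫ y, ψ (w s) y ∂(κ r s x))
    (n : ℕ) (hn : 0 < n)
    (tp : Fin (n + 1) → ℝ) (htp0 : tp 0 = 0) (htpn : tp (Fin.last n) = t)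
    (htpmono : StrictMono tp)
    (hmesh : ∀ i : Fin n, Q * (tp i.succ - tp i.castSucc) ≤ 1 / 2) :
    (∀ i : Fin n, ∀ r ∈ Set.Ico (tp i.castSucc) (tp i.succ), ∀ x : E,
        |w r x| ≤ 2 ^ (n - (i : ℕ)) * ⨆ x', |φ x'|) ∧
      (∀ x : E, |w 0 x| ≤ 2 ^ n * ⨆ x', |φ x'|) :=
  boundedness_of_approximating_solutions_general t κ hκ Q hQ ψ hψlow φ hφb hφpos ε hε w hwm hwb
    hwpos hψw hfix n hn tp htp0 htpn htpmono hmesh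
end

section
/- (Resolvent column inequality for nonnegative matrix semigroups.) Let λ > 0 and let M : [0, ∞) → Matrix(Fin 2, Fin 2, ℝ) be such that each entry s ↦ M(s)_{ij} is measurable and nonnegative, M satisfies the semigroup property M(s)·M(u) = M(s + u) for all s, u ≥ 0, and ∫₀^∞ e^{λs} M(s)_{ij} ds < ∞ for all i, j. For j ∈ {1, 2} define f^{(j)} ∈ ℝ² by f^{(j)}_i := ∫₀^∞ e^{λs} M(s)_{ij} ds. Then for every t ≥ 0 and every i ∈ {1, 2}: (M(t) · f^{(j)})_i ≤ e^{−λt} · f^{(j)}_i. -/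
/-!
Writing `f^{(j)}_k = ∫₀^∞ e^{λs} M(s)_{kj} ds`, linearity of the integral and the semigroup law give
`(M(t) f^{(j)})_i = ∫₀^∞ e^{λs} M(t + s)_{ij} ds`. The substitution `u = t + s` turns this into
`e^{-λt} ∫_t^∞ e^{λu} M(u)_{ij} du`, and since the integrand is nonnegative, dropping `[0, t]`
from the domain of integration can only decrease the integral.
-/

open MeasureTheory Set Matrix

theorem Matrix.mulVec_integral {α m n : Type*} [MeasurableSpace α] [Fintype n] {μ : Measure α}
    (A : Matrix m n ℝ) {g : n → α → ℝ} (hg : ∀ k, Integrable (g k) μ) :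
    (A *ᵥ fun k => ∫ x, g k x ∂μ) = fun i => ∫ x, (A *ᵥ fun k => g k x) i ∂μ := by
  ext i
  simp only [mulVec, dotProduct, ← integral_const_mul]
  exact (integral_finsetSum _ fun k _ => (hg k).const_mul _).symm

theorem setIntegral_Ioi_comp_add_right {E : Type*} [NormedAddCommGroup E] [NormedSpace ℝ E]
    (g : ℝ → E) (a t : ℝ) : ∫ s in Ioi a, g (s + t) = ∫ u in Ioi (a + t), g u := by
  rw [← image_add_const_Ioi,
    (measurePreserving_add_right volume t).setIntegral_image_emb (measurableEmbedding_addRight t)]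

theorem setIntegral_Ioi_exp_mul_comp_add (lam t : ℝ) (g : ℝ → ℝ) :
    ∫ s in Ioi 0, Real.exp (lam * s) * g (t + s)
      = Real.exp (-lam * t) * ∫ u in Ioi t, Real.exp (lam * u) * g u := by
  have hshift := setIntegral_Ioi_comp_add_right
    (fun u => Real.exp (-lam * t) * (Real.exp (lam * u) * g u)) 0 t
  rw [zero_add] at hshift
  rw [← integral_const_mul, ← hshift]
  refine setIntegral_congr_fun measurableSet_Ioi fun s _ => ?_
  rw [← mul_assoc, ← Real.exp_add, add_comm s t]
  congr 2
  ring

theorem mulVec_resolvent_column_apply {n : Type*} [Fintype n] (lam : ℝ) (M : ℝ → Matrix n n ℝ)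
    (hM : ∀ s ∈ Ici (0 : ℝ), ∀ u ∈ Ici (0 : ℝ), M s * M u = M (s + u)) {j : n}
    (hint : ∀ k, IntegrableOn (fun s => Real.exp (lam * s) * M s k j) (Ioi 0))
    {t : ℝ} (ht : 0 ≤ t) (i : n) :
    (M t *ᵥ fun k => ∫ s in Ioi 0, Real.exp (lam * s) * M s k j) i
      = ∫ s in Ioi 0, Real.exp (lam * s) * M (t + s) i j := by
  rw [mulVec_integral _ hint]
  refine setIntegral_congr_fun measurableSet_Ioi fun s hs => ?_
  rw [← hM t ht s (mem_Ici.2 hs.le), mul_apply, mulVec, dotProduct, Finset.mul_sum]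
  exact Finset.sum_congr rfl fun k _ => by ring

theorem resolvent_column_inequality_general
    (lam : ℝ)
    (M : ℝ → Matrix (Fin 2) (Fin 2) ℝ)
    (hMpos : ∀ s ∈ Set.Ici (0 : ℝ), ∀ i j : Fin 2, 0 ≤ M s i j)
    (hMsemigroup : ∀ s ∈ Set.Ici (0 : ℝ), ∀ u ∈ Set.Ici (0 : ℝ),
      M s * M u = M (s + u))
    (hMint : ∀ i j : Fin 2,
      IntegrableOn (fun s => Real.exp (lam * s) * M s i j) (Set.Ioi 0)) :
    ∀ t ∈ Set.Ici (0 : ℝ), ∀ j i : Fin 2,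
      (M t).mulVec (fun i' => ∫ s in Set.Ioi (0 : ℝ), Real.exp (lam * s) * M s i' j) i
        ≤ Real.exp (-lam * t) *
          ∫ s in Set.Ioi (0 : ℝ), Real.exp (lam * s) * M s i j := by
  intro t ht j i
  have hdrop : ∫ u in Ioi t, Real.exp (lam * u) * M u i j
      ≤ ∫ u in Ioi 0, Real.exp (lam * u) * M u i j := by
    refine setIntegral_mono_set (hMint i j) ?_ (Ioi_subset_Ioi ht).eventuallyLE
    filter_upwards [ae_restrict_mem measurableSet_Ioi] with u hu
    exact mul_nonneg (Real.exp_pos _).le (hMpos u (mem_Ici.2 hu.le) i j)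
  calc (M t *ᵥ fun k => ∫ s in Ioi 0, Real.exp (lam * s) * M s k j) i
      = ∫ s in Ioi 0, Real.exp (lam * s) * M (t + s) i j :=
        mulVec_resolvent_column_apply lam M hMsemigroup (fun k => hMint k j) ht i
    _ = Real.exp (-lam * t) * ∫ u in Ioi t, Real.exp (lam * u) * M u i j :=
        setIntegral_Ioi_exp_mul_comp_add lam t fun u => M u i j
    _ ≤ _ := mul_le_mul_of_nonneg_left hdrop (Real.exp_pos _).le

/-- **Resolvent column inequality for nonnegative matrix semigroups.**
Let `λ > 0` and let `M : [0, ∞) → ℝ^{2×2}` have measurable, nonnegative entries, satisfy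
the semigroup property `M(s) M(u) = M(s + u)` and `∫₀^∞ e^{λs} M(s)_{ij} ds < ∞` for
all `i, j`.  With `f^{(j)}_i := ∫₀^∞ e^{λs} M(s)_{ij} ds`, for every `t ≥ 0`, `j` and
`i` one has `(M(t) f^{(j)})_i ≤ e^{−λt} f^{(j)}_i`. -/
theorem resolvent_column_inequality
    (lam : ℝ) (hlam : 0 < lam)
    (M : ℝ → Matrix (Fin 2) (Fin 2) ℝ)
    (hMmeas : ∀ i j : Fin 2, Measurable fun s => M s i j)
    (hMpos : ∀ s ∈ Set.Ici (0 : ℝ), ∀ i j : Fin 2, 0 ≤ M s i j)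
    (hMsemigroup : ∀ s ∈ Set.Ici (0 : ℝ), ∀ u ∈ Set.Ici (0 : ℝ),
      M s * M u = M (s + u))
    (hMint : ∀ i j : Fin 2,
      IntegrableOn (fun s => Real.exp (lam * s) * M s i j) (Set.Ioi 0)) :
    ∀ t ∈ Set.Ici (0 : ℝ), ∀ j i : Fin 2,
      (M t).mulVec (fun i' => ∫ s in Set.Ioi (0 : ℝ), Real.exp (lam * s) * M s i' j) i
        ≤ Real.exp (-lam * t) *
          ∫ s in Set.Ioi (0 : ℝ), Real.exp (lam * s) * M s i j :=
  resolvent_column_inequality_general lam M hMpos hMsemigroup hMint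
end
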